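/- Let p > q be odd primes. Then Hol(D_{pq}) contains a regular subgroup isomorphic to C_p × D_q, and Hol(D_{pq}) contains a regular subgroup isomorphic to C_q × D_p. Here D_{pq} = DihedralGroup (p*q), C_p × D_q = Multiplicative (ZMod p) × DihedralGroup q, and C_q × D_p = Multiplicative (ZMod q) × DihedralGroup p; a regular subgroup of Hol(N) is a subgroup of Equiv.Perm N contained in Hol(N) that is transitive on N and has order |N|. -/

import Mathlib

/-- The left regular representation of a group `N` in `Equiv.Perm N`. -/
def leftReg (N : Type*) [Group N] : N →* Equiv.Perm N :=
  MulAction.toPermHom N N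

/-- The holomorph of `N`: the normalizer of the image of the left regular
representation inside `Equiv.Perm N`. -/
def Hol (N : Type*) [Group N] : Subgroup (Equiv.Perm N) :=
  Subgroup.normalizer ((leftReg N).range : Set (Equiv.Perm N))

/-- A subgroup of `Equiv.Perm N` is transitive on `N`. -/
def IsTransitiveSubgroup {N : Type*} [Group N] (M : Subgroup (Equiv.Perm N)) : Prop :=
  ∀ a b : N, ∃ g ∈ M, g a = b

/-- A group `G` embeds transitively in `Hol(N)` if there is an injective
homomorphism `G →* Equiv.Perm N` whose range lies in `Hol(N)` and is
transitive on `N`. -/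
def EmbedsTransitively (G : Type*) [Group G] (N : Type*) [Group N] : Prop :=
  ∃ φ : G →* Equiv.Perm N, Function.Injective φ ∧ φ.range ≤ Hol N ∧
    IsTransitiveSubgroup φ.range


/-! For coprime `m` and `n`, the Chinese remainder theorem factors `D_{mn}` exactly as `C · D`,
where `C = c(C_m)` consists of the rotations of order dividing `m` and `D = ι(D_n)` is the copy of
`D_n` built from the rotations of order dividing `n` and the reflections.
Transporting the left regular representation of `C_m × D_n` to `D_{mn}` along the bijection
`(a, y) ↦ c(a) ι(y)` gives a regular subgroup isomorphic to `C_m × D_n`. It lies in the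
holomorph because `(a, y)` acts as left multiplication by `c(a) ι(y)` after the automorphism of
`D_{mn}` that fixes `D` pointwise and acts on the normal subgroup `C` as conjugation by `ι(y)`:
the identity for a rotation `y`, and multiplication of rotation indices by the unit
`u ≡ -1 (mod m)`, `u ≡ 1 (mod n)` for a reflection `y`. -/

open Function

section Holomorph

variable {N : Type*} [Group N]

@[simp] lemma leftReg_apply (g x : N) : leftReg N g x = g * x := rfl

lemma leftReg_mem_Hol (n : N) : leftReg N n ∈ Hol N :=
  Subgroup.le_normalizer ⟨n, rfl⟩

@[simp] lemma MulAut.toPerm_apply (σ : MulAut N) (x : N) : toPerm N σ x = σ x := rfl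

lemma MulAut.toPerm_mul_leftReg_mul_inv (σ : MulAut N) (n : N) :
    toPerm N σ * leftReg N n * (toPerm N σ)⁻¹ = leftReg N (σ n) := by
  ext x
  simp [← map_inv]

lemma MulAut.toPerm_mem_Hol (σ : MulAut N) : toPerm N σ ∈ Hol N := by
  rw [Hol, Subgroup.mem_normalizer_iff_conj_image_eq, MonoidHom.coe_range, ← Set.range_comp]
  convert σ.surjective.range_comp (leftReg N) using 2
  funext n
  exact toPerm_mul_leftReg_mul_inv σ n

end Holomorph

section Transport

variable {G N : Type*} [Group G]

def transportedLeftReg (e : G ≃ N) : G →* Equiv.Perm N :=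
  e.permCongrHom.toMonoidHom.comp (leftReg G)

@[simp] lemma transportedLeftReg_apply (e : G ≃ N) (g x : G) :
    transportedLeftReg e g (e x) = e (g * x) := by
  simp [transportedLeftReg, Equiv.permCongrHom_coe]

lemma transportedLeftReg_injective (e : G ≃ N) : Injective (transportedLeftReg e) := by
  intro g h hgh
  simpa using congr(e.symm ($hgh (e 1)))

lemma isTransitiveSubgroup_range_transportedLeftReg [Group N] (e : G ≃ N) :
    IsTransitiveSubgroup (transportedLeftReg e).range := by
  intro a b
  refine ⟨_, ⟨e.symm b * (e.symm a)⁻¹, rfl⟩, ?_⟩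
  simpa using transportedLeftReg_apply e (e.symm b * (e.symm a)⁻¹) (e.symm a)

lemma embedsTransitively_of_transportedLeftReg_mem_Hol [Group N] (e : G ≃ N)
    (h : ∀ g, transportedLeftReg e g ∈ Hol N) : EmbedsTransitively G N :=
  ⟨transportedLeftReg e, transportedLeftReg_injective e, by rintro _ ⟨g, rfl⟩; exact h g,
    isTransitiveSubgroup_range_transportedLeftReg e⟩

lemma EmbedsTransitively.exists_regular_subgroup [Group N] (h : EmbedsTransitively G N)
    (hcard : Nat.card G = Nat.card N) :
    ∃ M : Subgroup (Equiv.Perm N), M ≤ Hol N ∧ IsTransitiveSubgroup M ∧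
      Nat.card M = Nat.card N ∧ Nonempty (M ≃* G) := by
  obtain ⟨φ, hφ, hHol, htrans⟩ := h
  exact ⟨φ.range, hHol, htrans, by rw [← hcard, Nat.card_congr (MonoidHom.ofInjective hφ).toEquiv],
    ⟨(MonoidHom.ofInjective hφ).symm⟩⟩

end Transport

section Factorization

variable {A B N : Type*} [Group A] [Group B] [Group N] {c : A →* N} {ι : B →* N}
  {α : B → MulAut N}

lemma transportedLeftReg_ofBijective_eq (hμ : Bijective fun g : A × B ↦ c g.1 * ι g.2)
    (hfix : ∀ y b, α y (ι b) = ι b) (hconj : ∀ y a, α y (c a) = (ι y)⁻¹ * c a * ι y)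
    (a : A) (y : B) :
    transportedLeftReg (Equiv.ofBijective _ hμ) (a, y) =
      leftReg N (c a * ι y) * MulAut.toPerm N (α y) := by
  ext x
  -- `c(a) c(b) ι(y) ι(z) = c(a) ι(y) · (ι(y)⁻¹ c(b) ι(y)) ι(z)`
  obtain ⟨⟨b, z⟩, rfl⟩ := hμ.surjective x
  have := transportedLeftReg_apply (Equiv.ofBijective _ hμ) (a, y) (b, z)
  simp only [Equiv.ofBijective_apply] at this
  simp [this, hfix, hconj, mul_assoc]

lemma embedsTransitively_prod_of_bijective (hμ : Bijective fun g : A × B ↦ c g.1 * ι g.2)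
    (hfix : ∀ y b, α y (ι b) = ι b) (hconj : ∀ y a, α y (c a) = (ι y)⁻¹ * c a * ι y) :
    EmbedsTransitively (A × B) N := by
  refine embedsTransitively_of_transportedLeftReg_mem_Hol (Equiv.ofBijective _ hμ) ?_
  rintro ⟨a, y⟩
  rw [transportedLeftReg_ofBijective_eq hμ hfix hconj]
  exact mul_mem (leftReg_mem_Hol _) (MulAut.toPerm_mem_Hol _)

end Factorization

namespace DihedralGroup

variable {m n : ℕ}

def rotation : Multiplicative (ZMod n) →* DihedralGroup n where
  toFun a := r a.toAdd
  map_one' := rfl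
  map_mul' _ _ := (r_mul_r _ _).symm

@[simp] lemma rotation_apply (a : Multiplicative (ZMod n)) : rotation a = r a.toAdd := rfl

def map (f : ZMod m →+ ZMod n) : DihedralGroup m →* DihedralGroup n where
  toFun
    | r i => r (f i)
    | sr i => sr (f i)
  map_one' := congrArg r (map_zero f)
  map_mul' x y := by cases x <;> cases y <;> simp [r_mul_r, r_mul_sr, sr_mul_r, sr_mul_sr]

@[simp] lemma map_r (f : ZMod m →+ ZMod n) (i : ZMod m) : map f (r i) = r (f i) := rfl

@[simp] lemma map_sr (f : ZMod m →+ ZMod n) (i : ZMod m) : map f (sr i) = sr (f i) := rfl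

def mulUnitAut (u : (ZMod n)ˣ) : MulAut (DihedralGroup n) :=
  MonoidHom.toMulEquiv (map (AddMonoidHom.mulLeft (u : ZMod n)))
    (map (AddMonoidHom.mulLeft (↑u⁻¹ : ZMod n)))
    (MonoidHom.ext fun x ↦ by cases x <;> simp [← mul_assoc])
    (MonoidHom.ext fun x ↦ by cases x <;> simp [← mul_assoc])

@[simp] lemma mulUnitAut_r (u : (ZMod n)ˣ) (i : ZMod n) :
    mulUnitAut u (r i) = r ((u : ZMod n) * i) := rfl

@[simp] lemma mulUnitAut_sr (u : (ZMod n)ˣ) (i : ZMod n) :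
    mulUnitAut u (sr i) = sr ((u : ZMod n) * i) := rfl

section CRT

variable (hco : m.Coprime n)

local notation "crt" => ZMod.chineseRemainder hco

def crtRotation : Multiplicative (ZMod m) →* DihedralGroup (m * n) :=
  rotation.comp ((crt).symm.toAddMonoidHom.comp (AddMonoidHom.inl _ _)).toMultiplicative

def crtInclusion : DihedralGroup n →* DihedralGroup (m * n) :=
  map ((crt).symm.toAddMonoidHom.comp (AddMonoidHom.inr _ _))

def crtUnit : (ZMod (m * n))ˣ :=
  ⟨(crt).symm (-1, 1), (crt).symm (-1, 1), by simp [← map_mul], by simp [← map_mul]⟩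

@[simp] lemma crtUnit_val : (crtUnit hco : ZMod (m * n)) = (crt).symm (-1, 1) := rfl

def crtAut : DihedralGroup n → MulAut (DihedralGroup (m * n))
  | r _ => 1
  | sr _ => mulUnitAut (crtUnit hco)

@[simp] lemma crtRotation_mul_crtInclusion_r (a : Multiplicative (ZMod m)) (j : ZMod n) :
    crtRotation hco a * crtInclusion hco (r j) = r ((crt).symm (a.toAdd, j)) := by
  simp [crtRotation, crtInclusion, r_mul_r, ← map_add]

@[simp] lemma crtRotation_mul_crtInclusion_sr (a : Multiplicative (ZMod m)) (j : ZMod n) :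
    crtRotation hco a * crtInclusion hco (sr j) = sr ((crt).symm (-a.toAdd, j)) := by
  simp [crtRotation, crtInclusion, r_mul_sr, ← map_sub]

lemma bijective_crtRotation_mul_crtInclusion :
    Bijective fun g : Multiplicative (ZMod m) × DihedralGroup n ↦
      crtRotation hco g.1 * crtInclusion hco g.2 := by
  refine bijective_iff_has_inverse.mpr
    ⟨fun | r k => (.ofAdd (crt k).1, r (crt k).2)
         | sr k => (.ofAdd (-(crt k).1), sr (crt k).2), ?_, ?_⟩
  · rintro ⟨a, j | j⟩ <;> simp
  · rintro (k | k) <;>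
      simp only [crtRotation_mul_crtInclusion_r, crtRotation_mul_crtInclusion_sr] <;> simp

lemma crtAut_crtInclusion (y b : DihedralGroup n) :
    crtAut hco y (crtInclusion hco b) = crtInclusion hco b := by
  rcases y with _ | _ <;> rcases b with _ | _ <;> simp [crtAut, crtInclusion, ← map_mul]

lemma crtAut_crtRotation (y : DihedralGroup n) (a : Multiplicative (ZMod m)) :
    crtAut hco y (crtRotation hco a) =
      (crtInclusion hco y)⁻¹ * crtRotation hco a * crtInclusion hco y := by
  rcases y with _ | _
  · simp [crtAut, crtInclusion, crtRotation, r_mul_r, inv_r]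
  · simp [crtAut, crtInclusion, crtRotation, sr_mul_r, sr_mul_sr, ← map_mul, ← map_neg]

end CRT

theorem embedsTransitively_prod (hco : m.Coprime n) :
    EmbedsTransitively (Multiplicative (ZMod m) × DihedralGroup n) (DihedralGroup (m * n)) :=
  embedsTransitively_prod_of_bijective (bijective_crtRotation_mul_crtInclusion hco)
    (crtAut_crtInclusion hco) (crtAut_crtRotation hco)

theorem exists_regular_subgroup_prod (hco : m.Coprime n) :
    ∃ M : Subgroup (Equiv.Perm (DihedralGroup (m * n))), M ≤ Hol (DihedralGroup (m * n)) ∧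
      IsTransitiveSubgroup M ∧ Nat.card M = Nat.card (DihedralGroup (m * n)) ∧
      Nonempty (M ≃* (Multiplicative (ZMod m) × DihedralGroup n)) := by
  refine (embedsTransitively_prod hco).exists_regular_subgroup ?_
  rw [Nat.card_prod, nat_card, nat_card, Nat.card_congr Multiplicative.toAdd, Nat.card_zmod]
  ring

end DihedralGroup

theorem hol_dihedral_has_regular_mixed_subgroups_general (p q : ℕ)
    (hp : p.Prime) (hq : q.Prime) (hlt : q < p) :
    (∃ M : Subgroup (Equiv.Perm (DihedralGroup (p * q))),
      M ≤ Hol (DihedralGroup (p * q)) ∧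
      IsTransitiveSubgroup M ∧
      Nat.card M = Nat.card (DihedralGroup (p * q)) ∧
      Nonempty (M ≃* (Multiplicative (ZMod p) × DihedralGroup q))) ∧
    (∃ M : Subgroup (Equiv.Perm (DihedralGroup (p * q))),
      M ≤ Hol (DihedralGroup (p * q)) ∧
      IsTransitiveSubgroup M ∧
      Nat.card M = Nat.card (DihedralGroup (p * q)) ∧
      Nonempty (M ≃* (Multiplicative (ZMod q) × DihedralGroup p))) := by
  have hpq : p.Coprime q := (Nat.coprime_primes hp hq).mpr hlt.ne'
  refine ⟨DihedralGroup.exists_regular_subgroup_prod hpq, ?_⟩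
  rw [mul_comm p q]
  exact DihedralGroup.exists_regular_subgroup_prod hpq.symm

theorem hol_dihedral_has_regular_mixed_subgroups (p q : ℕ)
    (hp : p.Prime) (hq : q.Prime) (hpodd : Odd p) (hqodd : Odd q) (hlt : q < p) :
    (∃ M : Subgroup (Equiv.Perm (DihedralGroup (p * q))),
      M ≤ Hol (DihedralGroup (p * q)) ∧
      IsTransitiveSubgroup M ∧
      Nat.card M = Nat.card (DihedralGroup (p * q)) ∧
      Nonempty (M ≃* (Multiplicative (ZMod p) × DihedralGroup q))) ∧
    (∃ M : Subgroup (Equiv.Perm (DihedralGroup (p * q))),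
      M ≤ Hol (DihedralGroup (p * q)) ∧
      IsTransitiveSubgroup M ∧
      Nat.card M = Nat.card (DihedralGroup (p * q)) ∧
      Nonempty (M ≃* (Multiplicative (ZMod q) × DihedralGroup p))) :=
  hol_dihedral_has_regular_mixed_subgroups_general p q hp hq hlt
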